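/- Let (uₙ)_{n≥0} be a sequence of polynomials in x whose coefficients are real-analytic functions of t with all Taylor coefficients about t = 0 nonnegative, satisfying the KP recursion (n+2)(n+1) u_{n+2} = ∂⁴uₙ/∂x⁴ + Σ_{j=0}^{n} ∂/∂x (u_j · ∂u_{n−j}/∂x) + ∂²uₙ/∂t∂x. Suppose u₀, u₁ have x-degrees d₀, d₁ with 3d₀ < 2d₁ + 2 and d₁ ≥ 3, and for some 0 < ε < 1 the leading x-coefficient of u₁ satisfies c_{1,0}(t) > ε for all t > 0. Then for every positive integer q and all t > 0, the coefficient c_{42q+1, 2q(d₁+4)}(t) of x^{d_{42q+1} − 2q(d₁+4)} in u_{42q+1} satisfies c_{42q+1, 2q(d₁+4)}(t) > [(12q(d₁−2)+d₁)! · (36q+1)!] / [(12q(d₁−3)+d₁)! · (42q+1)!] · ε^{12q+1}. In particular these coefficients grow factorially in q, so the formal series Σ uₙ yⁿ diverges. -/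

import Mathlib

open FormalMultilinearSeries
open scoped ENNReal

private lemma kp_deriv_series {f : ℝ → ℝ} {p : FormalMultilinearSeries ℝ ℝ ℝ} {x : ℝ}
    {r : ℝ≥0∞} (h : HasFPowerSeriesOnBall f p x r) :
    ∃ q : FormalMultilinearSeries ℝ ℝ ℝ,
      HasFPowerSeriesOnBall (deriv f) q x r ∧ ∀ n, q.coeff n = ((n : ℝ) + 1) * p.coeff (n + 1) := by
  refine ⟨(ContinuousLinearMap.apply ℝ ℝ (1 : ℝ)).compFormalMultilinearSeries p.derivSeries,
    ?_, ?_⟩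
  · have h2 := (ContinuousLinearMap.apply ℝ ℝ (1 : ℝ)).comp_hasFPowerSeriesOnBall h.fderiv
    have : deriv f = fun z => (ContinuousLinearMap.apply ℝ ℝ (1 : ℝ)) (fderiv ℝ f z) := by
      funext z
      simp [ContinuousLinearMap.apply_apply, fderiv_apply_one_eq_deriv]
    rw [this]
    exact h2
  · intro n
    have h1 : ((ContinuousLinearMap.apply ℝ ℝ (1 : ℝ)).compFormalMultilinearSeries
        p.derivSeries).coeff n = (p.derivSeries n fun _ => (1 : ℝ)) 1 := rfl
    rw [h1, derivSeries_apply_diag, nsmul_eq_mul]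
    push_cast
    rfl

private lemma kp_iter_nonneg_on_ball : ∀ (k : ℕ) (f : ℝ → ℝ)
    (p : FormalMultilinearSeries ℝ ℝ ℝ) (x : ℝ) (r : ℝ≥0∞),
    HasFPowerSeriesOnBall f p x r → (∀ n, 0 ≤ p.coeff n) →
    ∀ y : ℝ, 0 ≤ y → (‖y‖₊ : ℝ≥0∞) < r → 0 ≤ iteratedDeriv k f (x + y) := by
  intro k
  induction k with
  | zero =>
    intro f p x r h hc y hy0 hyr
    rw [iteratedDeriv_zero]
    have hsum := h.hasSum (by simpa [EMetric.mem_ball, enorm_eq_nnnorm] using hyr)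
    refine hsum.nonneg fun n => ?_
    rw [apply_eq_pow_smul_coeff]
    exact smul_nonneg (pow_nonneg hy0 n) (hc n)
  | succ k ih =>
    intro f p x r h hc y hy0 hyr
    rw [iteratedDeriv_succ']
    obtain ⟨q, hq, hqc⟩ := kp_deriv_series h
    refine ih (deriv f) q x r hq (fun n => ?_) y hy0 hyr
    rw [hqc]
    exact mul_nonneg (by positivity) (hc (n + 1))

private lemma kp_coeff_nonneg {f : ℝ → ℝ} {p : FormalMultilinearSeries ℝ ℝ ℝ} {x : ℝ}
    {r : ℝ≥0∞} (h : HasFPowerSeriesOnBall f p x r) (hd : ∀ m, 0 ≤ iteratedDeriv m f x) :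
    ∀ n, 0 ≤ p.coeff n := by
  intro n
  have h1 := h.factorial_smul (1 : ℝ) n
  have h2 : iteratedDeriv n f x = iteratedFDeriv ℝ n f x fun _ => 1 :=
    iteratedDeriv_eq_iteratedFDeriv
  have h3 : (n.factorial : ℝ) * p.coeff n = iteratedDeriv n f x := by
    rw [h2, ← h1, nsmul_eq_mul]
    rfl
  have h4 : (0 : ℝ) < n.factorial := by positivity
  nlinarith [hd n, h3]

private lemma kp_analytic_iteratedDeriv {f : ℝ → ℝ} (hf : ∀ t, AnalyticAt ℝ f t) :
    ∀ (m : ℕ) (t : ℝ), AnalyticAt ℝ (iteratedDeriv m f) t := by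
  intro m
  induction m with
  | zero => simpa [iteratedDeriv_zero] using hf
  | succ m ih =>
    intro t
    rw [iteratedDeriv_succ]
    obtain ⟨p, hp⟩ := ih t
    obtain ⟨r, hr⟩ := hp
    obtain ⟨q, hq, -⟩ := kp_deriv_series hr
    exact hq.analyticAt

private lemma kp_nonneg_prop {f : ℝ → ℝ} (hf : ∀ t, AnalyticAt ℝ f t)
    (h0 : ∀ m, 0 ≤ iteratedDeriv m f 0) {t : ℝ} (ht : 0 ≤ t) (m : ℕ) :
    0 ≤ iteratedDeriv m f t := by
  set s : Set ℝ := {x | ∀ m, 0 ≤ iteratedDeriv m f x} with hs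
  have hsub : Set.Icc (0 : ℝ) t ⊆ s := by
    apply IsClosed.Icc_subset_of_forall_exists_gt
    · have he : s ∩ Set.Icc 0 t
          = (⋂ m, (iteratedDeriv m f) ⁻¹' (Set.Ici 0)) ∩ Set.Icc 0 t := by
        ext z
        simp [hs, Set.mem_iInter]
      rw [he]
      exact (isClosed_iInter fun m => IsClosed.preimage (continuous_iff_continuousAt.2
        fun z => (kp_analytic_iteratedDeriv hf m z).continuousAt) isClosed_Ici).inter isClosed_Icc
    · exact h0
    · rintro x ⟨hxs, hx0, hxt⟩ y hy
      obtain ⟨p, hp⟩ := hf x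
      obtain ⟨r, hr⟩ := hp
      obtain ⟨ρ, hρ0, hρr⟩ := ENNReal.lt_iff_exists_nnreal_btwn.1 hr.r_pos
      have hρ0' : (0 : ℝ) < ρ := by exact_mod_cast hρ0
      set z := min y (x + ρ / 2) with hz
      have hxz : x < z := lt_min hy (by linarith)
      have hzy : z ≤ y := min_le_left _ _
      set w := z - x with hw
      have hw0 : 0 < w := by simp [hw]; linarith
      have hwρ : w ≤ (ρ : ℝ) / 2 := by
        have : z ≤ x + ρ / 2 := min_le_right _ _
        simp [hw]; linarith
      refine ⟨z, ?_, hxz, hzy⟩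
      intro m
      have hxw : z = x + w := by ring
      rw [hxw]
      refine kp_iter_nonneg_on_ball m f p x r hr (kp_coeff_nonneg hr hxs) w hw0.le ?_
      have h1 : (‖w‖₊ : ℝ≥0∞) < (ρ : ℝ≥0∞) := by
        rw [ENNReal.coe_lt_coe, ← NNReal.coe_lt_coe, coe_nnnorm, Real.norm_eq_abs,
          abs_of_nonneg hw0.le]
        linarith
      exact h1.trans hρr
  exact hsub ⟨ht, le_refl t⟩ m


private lemma kp_coeff_mul_nonneg {p q : Polynomial ℝ} (hp : ∀ i, 0 ≤ p.coeff i)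
    (hq : ∀ i, 0 ≤ q.coeff i) (i : ℕ) : 0 ≤ (p * q).coeff i := by
  rw [Polynomial.coeff_mul]
  exact Finset.sum_nonneg fun x _ => mul_nonneg (hp _) (hq _)

private lemma kp_coeff_deriv_nonneg {p : Polynomial ℝ} (h : ∀ i, 0 ≤ p.coeff i) (i : ℕ) :
    0 ≤ (Polynomial.derivative p).coeff i := by
  rw [Polynomial.coeff_derivative]
  exact mul_nonneg (h _) (by positivity)

private lemma kp_T3_nonneg (u : ℕ → ℝ → Polynomial ℝ)
    (hanalytic : ∀ (n k : ℕ) (t : ℝ), AnalyticAt ℝ (fun s => (u n s).coeff k) t)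
    (hder : ∀ (n k : ℕ) (t : ℝ), 0 < t → 0 ≤ deriv (fun s => (u n s).coeff k) t)
    (n k : ℕ) (t : ℝ) (ht : 0 < t) :
    0 ≤ deriv (fun s => (Polynomial.derivative (u n s)).coeff k) t := by
  have he : (fun s => (Polynomial.derivative (u n s)).coeff k)
      = fun s => (u n s).coeff (k + 1) * ((k : ℝ) + 1) := by
    funext s
    rw [Polynomial.coeff_derivative]
  rw [he, deriv_mul_const ((hanalytic n (k+1) t).differentiableAt)]
  exact mul_nonneg (hder n (k+1) t ht) (by positivity)

private lemma kp_step_x4 (u : ℕ → ℝ → Polynomial ℝ)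
    (hanalytic : ∀ (n k : ℕ) (t : ℝ), AnalyticAt ℝ (fun s => (u n s).coeff k) t)
    (hrec : ∀ n : ℕ, ∀ t : ℝ, ∀ k : ℕ,
      ((n : ℝ) + 2) * ((n : ℝ) + 1) * (u (n + 2) t).coeff k =
        (Polynomial.derivative (Polynomial.derivative (Polynomial.derivative
            (Polynomial.derivative (u n t))))).coeff k
          + (∑ j ∈ Finset.range (n + 1),
              Polynomial.derivative (u j t * Polynomial.derivative (u (n - j) t))).coeff k
          + deriv (fun s => (Polynomial.derivative (u n s)).coeff k) t)
    (hpos : ∀ (n k : ℕ) (t : ℝ), 0 < t → 0 ≤ (u n t).coeff k)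
    (hder : ∀ (n k : ℕ) (t : ℝ), 0 < t → 0 ≤ deriv (fun s => (u n s).coeff k) t)
    (n k : ℕ) (t : ℝ) (ht : 0 < t) :
    (u n t).coeff (k + 4) * (((k : ℝ) + 1) * ((k : ℝ) + 2) * ((k : ℝ) + 3) * ((k : ℝ) + 4))
      ≤ ((n : ℝ) + 2) * ((n : ℝ) + 1) * (u (n + 2) t).coeff k := by
  rw [hrec n t k]
  have h1 : (Polynomial.derivative (Polynomial.derivative (Polynomial.derivative
      (Polynomial.derivative (u n t))))).coeff k
      = (u n t).coeff (k + 4)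
        * (((k : ℝ) + 1) * ((k : ℝ) + 2) * ((k : ℝ) + 3) * ((k : ℝ) + 4)) := by
    simp only [Polynomial.coeff_derivative]
    push_cast
    ring
  have h2 : 0 ≤ (∑ j ∈ Finset.range (n + 1),
      Polynomial.derivative (u j t * Polynomial.derivative (u (n - j) t))).coeff k := by
    rw [Polynomial.finset_sum_coeff]
    refine Finset.sum_nonneg fun j _ => ?_
    exact kp_coeff_deriv_nonneg (kp_coeff_mul_nonneg (fun i => hpos j i t ht)
      (kp_coeff_deriv_nonneg (fun i => hpos (n - j) i t ht))) k
  have h3 := kp_T3_nonneg u hanalytic hder n k t ht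
  linarith [h1.ge, h1.le]

private lemma kp_step_pair (u : ℕ → ℝ → Polynomial ℝ)
    (hanalytic : ∀ (n k : ℕ) (t : ℝ), AnalyticAt ℝ (fun s => (u n s).coeff k) t)
    (hrec : ∀ n : ℕ, ∀ t : ℝ, ∀ k : ℕ,
      ((n : ℝ) + 2) * ((n : ℝ) + 1) * (u (n + 2) t).coeff k =
        (Polynomial.derivative (Polynomial.derivative (Polynomial.derivative
            (Polynomial.derivative (u n t))))).coeff k
          + (∑ j ∈ Finset.range (n + 1),
              Polynomial.derivative (u j t * Polynomial.derivative (u (n - j) t))).coeff k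
          + deriv (fun s => (Polynomial.derivative (u n s)).coeff k) t)
    (hpos : ∀ (n k : ℕ) (t : ℝ), 0 < t → 0 ≤ (u n t).coeff k)
    (hder : ∀ (n k : ℕ) (t : ℝ), 0 < t → 0 ≤ deriv (fun s => (u n s).coeff k) t)
    (d₁ : ℕ) (hd₁ : 3 ≤ d₁) (m' : ℕ) (t : ℝ) (ht : 0 < t) :
    ∑ a ∈ Finset.range (m' + 1),
        (((((m' + 1) * (d₁ - 2) + d₁ : ℕ)) : ℝ) + 1) * (((m' - a) * (d₁ - 2) + d₁ : ℕ) : ℝ)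
          * (u (3 * a + 1) t).coeff (a * (d₁ - 2) + d₁)
          * (u (3 * (m' - a) + 1) t).coeff ((m' - a) * (d₁ - 2) + d₁)
      ≤ ((3 * m' + 2 : ℝ) + 2) * ((3 * m' + 2 : ℝ) + 1)
          * (u (3 * m' + 2 + 2) t).coeff ((m' + 1) * (d₁ - 2) + d₁) := by
  set n := 3 * m' + 2 with hn
  set k := (m' + 1) * (d₁ - 2) + d₁ with hk
  have hrn := hrec n t k
  have hcast : ((n : ℕ) : ℝ) = (3 * m' + 2 : ℝ) := by rw [hn]; push_cast; ring
  -- T1 nonneg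
  have h1 : 0 ≤ (Polynomial.derivative (Polynomial.derivative (Polynomial.derivative
      (Polynomial.derivative (u n t))))).coeff k := by
    exact kp_coeff_deriv_nonneg (kp_coeff_deriv_nonneg (kp_coeff_deriv_nonneg
      (kp_coeff_deriv_nonneg (fun i => hpos n i t ht)))) k
  -- T3 nonneg
  have h3 := kp_T3_nonneg u hanalytic hder n k t ht
  -- T2 lower bound
  have h2 : ∑ a ∈ Finset.range (m' + 1),
        (((k : ℕ) : ℝ) + 1) * (((m' - a) * (d₁ - 2) + d₁ : ℕ) : ℝ)
          * (u (3 * a + 1) t).coeff (a * (d₁ - 2) + d₁)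
          * (u (3 * (m' - a) + 1) t).coeff ((m' - a) * (d₁ - 2) + d₁)
      ≤ (∑ j ∈ Finset.range (n + 1),
          Polynomial.derivative (u j t * Polynomial.derivative (u (n - j) t))).coeff k := by
    rw [Polynomial.finset_sum_coeff]
    have hFnn : ∀ j ∈ Finset.range (n + 1),
        0 ≤ (Polynomial.derivative (u j t * Polynomial.derivative (u (n - j) t))).coeff k :=
      fun j _ => kp_coeff_deriv_nonneg (kp_coeff_mul_nonneg (fun i => hpos j i t ht)
        (kp_coeff_deriv_nonneg (fun i => hpos (n - j) i t ht))) k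
    have hsub : Finset.image (fun a => 3 * a + 1) (Finset.range (m' + 1))
        ⊆ Finset.range (n + 1) := by
      intro j hj
      simp only [Finset.mem_image, Finset.mem_range] at hj ⊢
      obtain ⟨a, ha, rfl⟩ := hj
      omega
    have hstep : ∑ j ∈ Finset.image (fun a => 3 * a + 1) (Finset.range (m' + 1)),
          (Polynomial.derivative (u j t * Polynomial.derivative (u (n - j) t))).coeff k
        ≤ ∑ j ∈ Finset.range (n + 1),
          (Polynomial.derivative (u j t * Polynomial.derivative (u (n - j) t))).coeff k := by
      refine Finset.sum_le_sum_of_subset_of_nonneg hsub fun j hj _ => hFnn j hj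
    refine le_trans ?_ hstep
    rw [Finset.sum_image (by intro x _ y _ h; simp only at h; omega)]
    refine Finset.sum_le_sum fun a ha => ?_
    simp only [Finset.mem_range] at ha
    have ham : a ≤ m' := by omega
    set b := m' - a with hb
    -- key arithmetic identities
    have hC : (m' + 1) * (d₁ - 2) = a * (d₁ - 2) + b * (d₁ - 2) + (d₁ - 2) := by
      have : m' + 1 = a + b + 1 := by omega
      rw [this]; ring
    have hnj : n - (3 * a + 1) = 3 * b + 1 := by omega
    have hga_le : a * (d₁ - 2) + d₁ ≤ k + 1 := by
      rw [hk]; omega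
    have hgb1 : 1 ≤ b * (d₁ - 2) + d₁ := by omega
    have hsplit : k + 1 - (a * (d₁ - 2) + d₁) = (b * (d₁ - 2) + d₁) - 1 := by
      rw [hk]; omega
    rw [hnj]
    -- coefficient of the derivative of the product
    rw [Polynomial.coeff_derivative]
    have hmul : (u (3 * a + 1) t).coeff (a * (d₁ - 2) + d₁)
          * (Polynomial.derivative (u (3 * b + 1) t)).coeff (k + 1 - (a * (d₁ - 2) + d₁))
        ≤ (u (3 * a + 1) t * Polynomial.derivative (u (3 * b + 1) t)).coeff (k + 1) := by
      rw [Polynomial.coeff_mul]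
      have hmem : ((a * (d₁ - 2) + d₁), (k + 1 - (a * (d₁ - 2) + d₁)))
          ∈ Finset.HasAntidiagonal.antidiagonal (k + 1) := by
        rw [Finset.HasAntidiagonal.mem_antidiagonal]
        omega
      exact Finset.single_le_sum (f := fun x =>
          (u (3 * a + 1) t).coeff x.1 * (Polynomial.derivative (u (3 * b + 1) t)).coeff x.2)
        (fun x _ => mul_nonneg (hpos _ _ t ht)
          (kp_coeff_deriv_nonneg (fun i => hpos (3 * b + 1) i t ht) _)) hmem
    have hdco : (Polynomial.derivative (u (3 * b + 1) t)).coeff (k + 1 - (a * (d₁ - 2) + d₁))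
        = (u (3 * b + 1) t).coeff (b * (d₁ - 2) + d₁) * ((b * (d₁ - 2) + d₁ : ℕ) : ℝ) := by
      rw [hsplit, Polynomial.coeff_derivative]
      have h5 : (b * (d₁ - 2) + d₁) - 1 + 1 = b * (d₁ - 2) + d₁ := by omega
      rw [h5]
      congr 1
      push_cast [Nat.cast_sub hgb1]
      ring
    rw [hdco] at hmul
    calc (((k : ℕ) : ℝ) + 1) * (((b * (d₁ - 2) + d₁ : ℕ)) : ℝ)
          * (u (3 * a + 1) t).coeff (a * (d₁ - 2) + d₁)
          * (u (3 * b + 1) t).coeff (b * (d₁ - 2) + d₁)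
        = ((u (3 * a + 1) t).coeff (a * (d₁ - 2) + d₁)
            * ((u (3 * b + 1) t).coeff (b * (d₁ - 2) + d₁) * ((b * (d₁ - 2) + d₁ : ℕ) : ℝ)))
            * (((k : ℕ) : ℝ) + 1) := by ring
      _ ≤ (u (3 * a + 1) t * Polynomial.derivative (u (3 * b + 1) t)).coeff (k + 1)
            * (((k : ℕ) : ℝ) + 1) := by
          refine mul_le_mul_of_nonneg_right hmul (by positivity)
      _ = (u (3 * a + 1) t * Polynomial.derivative (u (3 * b + 1) t)).coeff (k + 1)
            * (((k : ℕ) : ℝ) + 1) := rfl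
  -- combine
  have := hrn
  rw [hcast] at this
  rw [this]
  linarith [h2]


private lemma kp_gauss : ∀ n : ℕ, ∑ j ∈ Finset.range n, ((j : ℝ) + 4) = n * (n + 7) / 2 := by
  intro n
  induction n with
  | zero => simp
  | succ n ih =>
    rw [Finset.sum_range_succ, ih]
    push_cast
    ring

private lemma kp_g_lb (d₁ : ℕ) (hd₁ : 3 ≤ d₁) (b : ℕ) :
    (b : ℝ) + 3 ≤ ((b * (d₁ - 2) + d₁ : ℕ) : ℝ) := by
  have h : b + 3 ≤ b * (d₁ - 2) + d₁ := by
    have h1 : 1 ≤ d₁ - 2 := by omega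
    have h2 : b * 1 ≤ b * (d₁ - 2) := Nat.mul_le_mul_left b h1
    omega
  exact_mod_cast h

private lemma kp_scalar (d₁ : ℕ) (hd₁ : 3 ≤ d₁) (m' : ℕ) :
    (3 * (m' : ℝ) + 4) * (3 * (m' : ℝ) + 3) * (5 / 4)
      ≤ ∑ a ∈ Finset.range (m' + 1),
          ((((m' + 1) * (d₁ - 2) + d₁ : ℕ) : ℝ) + 1) * (((m' - a) * (d₁ - 2) + d₁ : ℕ) : ℝ)
            * (if a = 0 then (1 : ℝ) else 5 / 4) * (if m' - a = 0 then (1 : ℝ) else 5 / 4) := by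
  have hD : (3 : ℝ) ≤ (d₁ : ℝ) := by exact_mod_cast hd₁
  have hc2 : ((d₁ - 2 : ℕ) : ℝ) = (d₁ : ℝ) - 2 := by
    push_cast [Nat.cast_sub (by omega : 2 ≤ d₁)]; ring
  rcases m' with _ | _ | mm
  · norm_num [Finset.sum_range_one]
    push_cast [hc2]
    nlinarith
  · norm_num [Finset.sum_range_succ, Finset.sum_range_one]
    push_cast [hc2]
    nlinarith
  · rw [show mm + 2 + 1 = (mm + 1) + 1 + 1 from rfl, Finset.sum_range_succ,
      Finset.sum_range_succ']
    set F : ℕ → ℝ := fun a =>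
      ((((mm + 2 + 1) * (d₁ - 2) + d₁ : ℕ) : ℝ) + 1) * (((mm + 2 - a) * (d₁ - 2) + d₁ : ℕ) : ℝ)
        * (if a = 0 then (1 : ℝ) else 5 / 4) * (if mm + 2 - a = 0 then (1 : ℝ) else 5 / 4)
      with hFdef
    set X : ℝ := (((mm + 2 + 1) * (d₁ - 2) + d₁ : ℕ) : ℝ) + 1 with hXdef
    have hX0 : 0 ≤ X := by positivity
    have hX7 : (mm : ℝ) + 7 ≤ X := by
      have := kp_g_lb d₁ hd₁ (mm + 2 + 1)
      rw [hXdef]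
      push_cast at this ⊢
      linarith
    have h0 : X * (5 / 4) * ((mm : ℝ) + 5) ≤ F 0 := by
      have hg := kp_g_lb d₁ hd₁ (mm + 2)
      simp only [hFdef]
      norm_num
      push_cast at hg ⊢
      nlinarith
    have h2 : X * (5 / 4) * 3 ≤ F (mm + 2) := by
      have hg := kp_g_lb d₁ hd₁ 0
      simp only [hFdef]
      norm_num
      push_cast at hg ⊢
      nlinarith
    have hm : X * (25 / 16) * (((mm : ℝ) + 1) * ((mm : ℝ) + 8) / 2)
        ≤ ∑ i ∈ Finset.range (mm + 1), F (i + 1) := by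
      have hterm : ∀ i ∈ Finset.range (mm + 1),
          X * (25 / 16) * (((mm + 1 - 1 - i : ℕ) : ℝ) + 4) ≤ F (i + 1) := by
        intro i hi
        simp only [Finset.mem_range] at hi
        have hilemm : i ≤ mm := by omega
        have hne1 : ¬(i + 1 = 0) := by omega
        have hne2 : ¬(mm + 2 - (i + 1) = 0) := by omega
        have hidx : mm + 2 - (i + 1) = (mm + 1 - 1 - i) + 1 := by omega
        have hg := kp_g_lb d₁ hd₁ ((mm + 1 - 1 - i) + 1)
        simp only [hFdef, hne1, hne2, if_false, hidx]
        push_cast at hg ⊢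
        nlinarith
      calc X * (25 / 16) * (((mm : ℝ) + 1) * ((mm : ℝ) + 8) / 2)
          = ∑ i ∈ Finset.range (mm + 1), X * (25 / 16) * (((mm + 1 - 1 - i : ℕ) : ℝ) + 4) := by
            rw [← Finset.mul_sum, Finset.sum_range_reflect (fun j => ((j : ℕ) : ℝ) + 4) (mm + 1),
              kp_gauss]
            push_cast
            ring
        _ ≤ ∑ i ∈ Finset.range (mm + 1), F (i + 1) := Finset.sum_le_sum hterm
    have hfinal : (3 * ((mm : ℝ) + 2) + 4) * (3 * ((mm : ℝ) + 2) + 3) * (5 / 4)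
        ≤ X * (25 / 16) * (((mm : ℝ) + 1) * ((mm : ℝ) + 8) / 2) + X * (5 / 4) * ((mm : ℝ) + 5)
          + X * (5 / 4) * 3 := by
      have hmm : (0 : ℝ) ≤ (mm : ℝ) := Nat.cast_nonneg mm
      have hbr : (0 : ℝ) ≤ (25 / 16) * (((mm : ℝ) + 1) * ((mm : ℝ) + 8) / 2)
          + (5 / 4) * ((mm : ℝ) + 5) + (5 / 4) * 3 := by nlinarith
      have hkey := mul_le_mul_of_nonneg_right hX7 hbr
      nlinarith [hkey, hmm, sq_nonneg ((mm : ℝ)), mul_nonneg (mul_nonneg hmm hmm) hmm]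
    have hsum_all : X * (25 / 16) * (((mm : ℝ) + 1) * ((mm : ℝ) + 8) / 2)
          + X * (5 / 4) * ((mm : ℝ) + 5) + X * (5 / 4) * 3
        ≤ (∑ i ∈ Finset.range (mm + 1), F (i + 1)) + F 0 + F (mm + 2) := by linarith
    calc (3 * ((mm + 1 + 1 : ℕ) : ℝ) + 4) * (3 * ((mm + 1 + 1 : ℕ) : ℝ) + 3) * (5 / 4)
        = (3 * ((mm : ℝ) + 2) + 4) * (3 * ((mm : ℝ) + 2) + 3) * (5 / 4) := by push_cast; ring
      _ ≤ _ := le_trans hfinal hsum_all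


private lemma kp_lambda (u : ℕ → ℝ → Polynomial ℝ)
    (hanalytic : ∀ (n k : ℕ) (t : ℝ), AnalyticAt ℝ (fun s => (u n s).coeff k) t)
    (hrec : ∀ n : ℕ, ∀ t : ℝ, ∀ k : ℕ,
      ((n : ℝ) + 2) * ((n : ℝ) + 1) * (u (n + 2) t).coeff k =
        (Polynomial.derivative (Polynomial.derivative (Polynomial.derivative
            (Polynomial.derivative (u n t))))).coeff k
          + (∑ j ∈ Finset.range (n + 1),
              Polynomial.derivative (u j t * Polynomial.derivative (u (n - j) t))).coeff k
          + deriv (fun s => (Polynomial.derivative (u n s)).coeff k) t)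
    (hpos : ∀ (n k : ℕ) (t : ℝ), 0 < t → 0 ≤ (u n t).coeff k)
    (hder : ∀ (n k : ℕ) (t : ℝ), 0 < t → 0 ≤ deriv (fun s => (u n s).coeff k) t)
    (d₁ : ℕ) (hd₁ : 3 ≤ d₁) (ε : ℝ) (hε0 : 0 < ε)
    (hlead1 : ∀ t : ℝ, 0 < t → ε < (u 1 t).coeff d₁) :
    ∀ (m : ℕ) (t : ℝ), 0 < t →
      (if m = 0 then (1 : ℝ) else 5 / 4) * ε ^ (m + 1)
        < (u (3 * m + 1) t).coeff (m * (d₁ - 2) + d₁) := by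
  have hΛpos : ∀ j : ℕ, 0 < (if j = 0 then (1 : ℝ) else 5 / 4) := fun j => by
    split <;> norm_num
  intro m
  induction m using Nat.strong_induction_on with
  | _ m ih =>
    match m with
    | 0 =>
      intro t ht
      have := hlead1 t ht
      simpa using this
    | m' + 1 =>
      intro t ht
      have hstep := kp_step_pair u hanalytic hrec hpos hder d₁ hd₁ m' t ht
      have hscal := kp_scalar d₁ hd₁ m'
      set X : ℝ := ((((m' + 1) * (d₁ - 2) + d₁ : ℕ)) : ℝ) + 1 with hXdef
      have hX0 : (0 : ℝ) < X := by positivity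
      -- strict termwise bound
      have hsum : ∑ a ∈ Finset.range (m' + 1),
            X * (((m' - a) * (d₁ - 2) + d₁ : ℕ) : ℝ)
              * ((if a = 0 then (1 : ℝ) else 5 / 4)
                  * (if m' - a = 0 then (1 : ℝ) else 5 / 4)) * ε ^ (m' + 2)
          < ∑ a ∈ Finset.range (m' + 1),
            X * (((m' - a) * (d₁ - 2) + d₁ : ℕ) : ℝ)
              * (u (3 * a + 1) t).coeff (a * (d₁ - 2) + d₁)
              * (u (3 * (m' - a) + 1) t).coeff ((m' - a) * (d₁ - 2) + d₁) := by
        refine Finset.sum_lt_sum_of_nonempty (by simp) fun a ha => ?_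
        simp only [Finset.mem_range] at ha
        have hba : a ≤ m' := by omega
        have hia := ih a (by omega) t ht
        have hib := ih (m' - a) (by omega) t ht
        have hma : 0 < (if a = 0 then (1 : ℝ) else 5 / 4) * ε ^ (a + 1) := by
          exact mul_pos (hΛpos a) (pow_pos hε0 _)
        have hmb : 0 < (if m' - a = 0 then (1 : ℝ) else 5 / 4) * ε ^ (m' - a + 1) := by
          exact mul_pos (hΛpos (m' - a)) (pow_pos hε0 _)
        have hcc := mul_lt_mul'' hia hib hma.le hmb.le
        have hXg : (0 : ℝ) < X * (((m' - a) * (d₁ - 2) + d₁ : ℕ) : ℝ) := by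
          have : (0 : ℕ) < (m' - a) * (d₁ - 2) + d₁ := by omega
          have h2 : (0 : ℝ) < (((m' - a) * (d₁ - 2) + d₁ : ℕ) : ℝ) := by exact_mod_cast this
          exact mul_pos hX0 h2
        have hpow : ε ^ (a + 1) * ε ^ (m' - a + 1) = ε ^ (m' + 2) := by
          rw [← pow_add]
          congr 1
          omega
        calc X * (((m' - a) * (d₁ - 2) + d₁ : ℕ) : ℝ)
              * ((if a = 0 then (1 : ℝ) else 5 / 4)
                  * (if m' - a = 0 then (1 : ℝ) else 5 / 4)) * ε ^ (m' + 2)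
            = X * (((m' - a) * (d₁ - 2) + d₁ : ℕ) : ℝ)
              * (((if a = 0 then (1 : ℝ) else 5 / 4) * ε ^ (a + 1))
                  * ((if m' - a = 0 then (1 : ℝ) else 5 / 4) * ε ^ (m' - a + 1))) := by
              rw [← hpow]
              ring
          _ < X * (((m' - a) * (d₁ - 2) + d₁ : ℕ) : ℝ)
              * ((u (3 * a + 1) t).coeff (a * (d₁ - 2) + d₁)
                  * (u (3 * (m' - a) + 1) t).coeff ((m' - a) * (d₁ - 2) + d₁)) := by
              exact mul_lt_mul_of_pos_left hcc hXg
          _ = X * (((m' - a) * (d₁ - 2) + d₁ : ℕ) : ℝ)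
              * (u (3 * a + 1) t).coeff (a * (d₁ - 2) + d₁)
              * (u (3 * (m' - a) + 1) t).coeff ((m' - a) * (d₁ - 2) + d₁) := by ring
      -- scalar bound on the left sum
      have hleft : (3 * (m' : ℝ) + 4) * (3 * (m' : ℝ) + 3) * (5 / 4) * ε ^ (m' + 2)
          ≤ ∑ a ∈ Finset.range (m' + 1),
            X * (((m' - a) * (d₁ - 2) + d₁ : ℕ) : ℝ)
              * ((if a = 0 then (1 : ℝ) else 5 / 4)
                  * (if m' - a = 0 then (1 : ℝ) else 5 / 4)) * ε ^ (m' + 2) := by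
        rw [← Finset.sum_mul]
        refine mul_le_mul_of_nonneg_right ?_ (pow_nonneg hε0.le _)
        refine le_trans hscal (le_of_eq (Finset.sum_congr rfl fun a ha => by rw [hXdef]; ring))
      -- combine with the recursion bound
      have hchain : (3 * (m' : ℝ) + 4) * (3 * (m' : ℝ) + 3) * ((5 / 4) * ε ^ (m' + 2))
          < (3 * (m' : ℝ) + 4) * (3 * (m' : ℝ) + 3)
            * (u (3 * m' + 2 + 2) t).coeff ((m' + 1) * (d₁ - 2) + d₁) := by
        have h1 : ∑ a ∈ Finset.range (m' + 1),
            X * (((m' - a) * (d₁ - 2) + d₁ : ℕ) : ℝ)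
              * (u (3 * a + 1) t).coeff (a * (d₁ - 2) + d₁)
              * (u (3 * (m' - a) + 1) t).coeff ((m' - a) * (d₁ - 2) + d₁)
            ≤ ((3 * (m' : ℝ) + 2) + 2) * ((3 * (m' : ℝ) + 2) + 1)
              * (u (3 * m' + 2 + 2) t).coeff ((m' + 1) * (d₁ - 2) + d₁) := by
          refine le_trans (le_of_eq (Finset.sum_congr rfl fun a ha => by rw [hXdef])) hstep
        calc (3 * (m' : ℝ) + 4) * (3 * (m' : ℝ) + 3) * ((5 / 4) * ε ^ (m' + 2))
            = (3 * (m' : ℝ) + 4) * (3 * (m' : ℝ) + 3) * (5 / 4) * ε ^ (m' + 2) := by ring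
          _ ≤ _ := hleft
          _ < _ := hsum
          _ ≤ ((3 * (m' : ℝ) + 2) + 2) * ((3 * (m' : ℝ) + 2) + 1)
              * (u (3 * m' + 2 + 2) t).coeff ((m' + 1) * (d₁ - 2) + d₁) := h1
          _ = (3 * (m' : ℝ) + 4) * (3 * (m' : ℝ) + 3)
              * (u (3 * m' + 2 + 2) t).coeff ((m' + 1) * (d₁ - 2) + d₁) := by ring
      have hKpos : (0 : ℝ) < (3 * (m' : ℝ) + 4) * (3 * (m' : ℝ) + 3) := by positivity
      have hfin := lt_of_mul_lt_mul_left
        (a := (3 * (m' : ℝ) + 4) * (3 * (m' : ℝ) + 3)) (by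
          calc (3 * (m' : ℝ) + 4) * (3 * (m' : ℝ) + 3) * ((5 / 4) * ε ^ (m' + 2))
              < _ := hchain) hKpos.le
      have hidx : 3 * (m' + 1) + 1 = 3 * m' + 2 + 2 := by ring
      rw [if_neg (Nat.succ_ne_zero m'), hidx]
      exact hfin


private lemma kp_x4_phase (u : ℕ → ℝ → Polynomial ℝ)
    (hanalytic : ∀ (n k : ℕ) (t : ℝ), AnalyticAt ℝ (fun s => (u n s).coeff k) t)
    (hrec : ∀ n : ℕ, ∀ t : ℝ, ∀ k : ℕ,
      ((n : ℝ) + 2) * ((n : ℝ) + 1) * (u (n + 2) t).coeff k =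
        (Polynomial.derivative (Polynomial.derivative (Polynomial.derivative
            (Polynomial.derivative (u n t))))).coeff k
          + (∑ j ∈ Finset.range (n + 1),
              Polynomial.derivative (u j t * Polynomial.derivative (u (n - j) t))).coeff k
          + deriv (fun s => (Polynomial.derivative (u n s)).coeff k) t)
    (hpos : ∀ (n k : ℕ) (t : ℝ), 0 < t → 0 ≤ (u n t).coeff k)
    (hder : ∀ (n k : ℕ) (t : ℝ), 0 < t → 0 ≤ deriv (fun s => (u n s).coeff k) t)
    (d₁ : ℕ) (hd₁ : 3 ≤ d₁) (ε : ℝ) (hε0 : 0 < ε) (q : ℕ) (hq : 1 ≤ q)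
    (t : ℝ) (ht : 0 < t)
    (hbase : ε ^ (12 * q + 1) < (u (36 * q + 1) t).coeff (12 * q * (d₁ - 2) + d₁)) :
    ∀ j : ℕ, j ≤ 3 * q →
      ε ^ (12 * q + 1) * ((12 * q * (d₁ - 2) + d₁).factorial : ℝ)
          * ((36 * q + 1).factorial : ℝ)
        < (u (36 * q + 1 + 2 * j) t).coeff (12 * q * (d₁ - 2) + d₁ - 4 * j)
          * ((12 * q * (d₁ - 2) + d₁ - 4 * j).factorial : ℝ)
          * ((36 * q + 1 + 2 * j).factorial : ℝ) := by
  have hG12 : 12 * q ≤ 12 * q * (d₁ - 2) := by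
    have : 12 * q * 1 ≤ 12 * q * (d₁ - 2) := Nat.mul_le_mul_left _ (by omega)
    omega
  intro j
  induction j with
  | zero =>
    intro _
    simp only [Nat.mul_zero, Nat.add_zero, Nat.sub_zero]
    have hf1 : (0 : ℝ) < ((12 * q * (d₁ - 2) + d₁).factorial : ℝ) := by positivity
    have hf2 : (0 : ℝ) < ((36 * q + 1).factorial : ℝ) := by positivity
    exact mul_lt_mul_of_pos_right (mul_lt_mul_of_pos_right hbase hf1) hf2
  | succ j ihj =>
    intro hj1
    have hj : j ≤ 3 * q := by omega
    have ih := ihj hj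
    set G := 12 * q * (d₁ - 2) + d₁ with hGdef
    set N := 36 * q + 1 + 2 * j with hNdef
    set K := G - 4 * (j + 1) with hKdef
    have hK4 : K + 4 = G - 4 * j := by omega
    have hstep := kp_step_x4 u hanalytic hrec hpos hder N K t ht
    rw [hK4] at hstep
    -- nonnegativity facts
    have hC1nn : 0 ≤ (u N t).coeff (G - 4 * j) := hpos _ _ t ht
    have hfK : (0 : ℝ) < (K.factorial : ℝ) := by positivity
    have hfN : (0 : ℝ) < (N.factorial : ℝ) := by positivity
    -- factorial identities
    have hfac1 : ((G - 4 * j).factorial : ℝ)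
        = (K.factorial : ℝ) * (((K : ℝ) + 1) * ((K : ℝ) + 2) * ((K : ℝ) + 3) * ((K : ℝ) + 4)) := by
      rw [← hK4]
      have : (K + 4).factorial = K.factorial * ((K + 1) * (K + 2) * (K + 3) * (K + 4)) := by
        rw [show K + 4 = K + 3 + 1 from rfl, Nat.factorial_succ,
          show K + 3 = K + 2 + 1 from rfl, Nat.factorial_succ,
          show K + 2 = K + 1 + 1 from rfl, Nat.factorial_succ, Nat.factorial_succ]
        ring
      rw [this]
      push_cast
      ring
    have hfac2 : ((36 * q + 1 + 2 * (j + 1)).factorial : ℝ)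
        = (((N : ℝ) + 2) * ((N : ℝ) + 1)) * (N.factorial : ℝ) := by
      have h1 : 36 * q + 1 + 2 * (j + 1) = N + 1 + 1 := by omega
      rw [h1, Nat.factorial_succ, Nat.factorial_succ]
      push_cast
      ring
    have hidx : 36 * q + 1 + 2 * (j + 1) = N + 2 := by omega
    calc ε ^ (12 * q + 1) * (G.factorial : ℝ) * ((36 * q + 1).factorial : ℝ)
        < (u N t).coeff (G - 4 * j) * ((G - 4 * j).factorial : ℝ) * (N.factorial : ℝ) := ih
      _ = ((u N t).coeff (G - 4 * j)
            * (((K : ℝ) + 1) * ((K : ℝ) + 2) * ((K : ℝ) + 3) * ((K : ℝ) + 4)))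
            * ((K.factorial : ℝ) * (N.factorial : ℝ)) := by rw [hfac1]; ring
      _ ≤ (((N : ℝ) + 2) * ((N : ℝ) + 1) * (u (N + 2) t).coeff K)
            * ((K.factorial : ℝ) * (N.factorial : ℝ)) := by
          refine mul_le_mul_of_nonneg_right hstep (by positivity)
      _ = (u (N + 2) t).coeff K * (K.factorial : ℝ)
            * ((((N : ℝ) + 2) * ((N : ℝ) + 1)) * (N.factorial : ℝ)) := by ring
      _ = (u (36 * q + 1 + 2 * (j + 1)) t).coeff K * (K.factorial : ℝ)
            * ((36 * q + 1 + 2 * (j + 1)).factorial : ℝ) := by rw [hfac2, hidx]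


/-- **Factorial divergence for the KP recursion, case `3d₀ < 2d₁ + 2` (Lemma 3.5(ii)).**
For polynomials `uₙ` in `x` whose coefficients are real-analytic functions of `t`
with nonnegative Taylor coefficients at `t = 0`, satisfying the KP recursion,
if `u₀, u₁` have `x`-degrees `d₀, d₁` with `3d₀ < 2d₁ + 2`, `d₁ ≥ 3`, and for all
`t > 0` the leading coefficient of `u₁` satisfies `c_{1,0}(t) > ε` for some
`0 < ε < 1`, then for every positive integer `q` and all `t > 0` the coefficient
`c_{42q+1, 2q(d₁+4)}(t)` of `x^{d_{42q+1} - 2q(d₁+4)}` in `u_{42q+1}` (with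
`d_{42q+1} = 14q(d₁-2)+d₁`) satisfies
`c_{42q+1, 2q(d₁+4)}(t) > (12q(d₁-2)+d₁)! (36q+1)! / ((12q(d₁-3)+d₁)! (42q+1)!) · ε^{12q+1}`,
a factorially growing lower bound. -/
theorem kp_recursion_factorial_divergence_case_two
    (u : ℕ → ℝ → Polynomial ℝ)
    (hanalytic : ∀ n k, ∀ t : ℝ, AnalyticAt ℝ (fun s => (u n s).coeff k) t)
    (htaylor : ∀ n k m, 0 ≤ iteratedDeriv m (fun s => (u n s).coeff k) 0)
    (hrec : ∀ n : ℕ, ∀ t : ℝ, ∀ k : ℕ,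
      ((n : ℝ) + 2) * ((n : ℝ) + 1) * (u (n + 2) t).coeff k =
        (Polynomial.derivative (Polynomial.derivative (Polynomial.derivative
            (Polynomial.derivative (u n t))))).coeff k
          + (∑ j ∈ Finset.range (n + 1),
              Polynomial.derivative (u j t * Polynomial.derivative (u (n - j) t))).coeff k
          + deriv (fun s => (Polynomial.derivative (u n s)).coeff k) t)
    (d₀ d₁ : ℕ)
    (hdeg0 : ∀ t : ℝ, 0 < t → (u 0 t).natDegree = d₀)
    (hdeg1 : ∀ t : ℝ, 0 < t → (u 1 t).natDegree = d₁)
    (hcase : 3 * d₀ < 2 * d₁ + 2) (hd₁ : 3 ≤ d₁)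
    (ε : ℝ) (hε0 : 0 < ε) (hε1 : ε < 1)
    (hlead1 : ∀ t : ℝ, 0 < t → ε < (u 1 t).coeff d₁) :
    ∀ q : ℕ, 1 ≤ q → ∀ t : ℝ, 0 < t →
      ((12 * q * (d₁ - 2) + d₁).factorial * (36 * q + 1).factorial : ℝ) /
          ((12 * q * (d₁ - 3) + d₁).factorial * (42 * q + 1).factorial)
          * ε ^ (12 * q + 1)
        < (u (42 * q + 1) t).coeff ((14 * q * (d₁ - 2) + d₁) - 2 * q * (d₁ + 4)) := by
  intro q hq t ht
  have hpos : ∀ (n k : ℕ) (s : ℝ), 0 < s → 0 ≤ (u n s).coeff k := by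
    intro n k s hs
    have := kp_nonneg_prop (hanalytic n k) (htaylor n k) hs.le 0
    simpa [iteratedDeriv_zero] using this
  have hder : ∀ (n k : ℕ) (s : ℝ), 0 < s → 0 ≤ deriv (fun x => (u n x).coeff k) s := by
    intro n k s hs
    have := kp_nonneg_prop (hanalytic n k) (htaylor n k) hs.le 1
    simpa [iteratedDeriv_one] using this
  have hlam := kp_lambda u hanalytic hrec hpos hder d₁ hd₁ ε hε0 hlead1 (12 * q) t ht
  rw [if_neg (by omega : ¬(12 * q = 0))] at hlam
  have hidx0 : 3 * (12 * q) + 1 = 36 * q + 1 := by ring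
  rw [hidx0] at hlam
  have hbase : ε ^ (12 * q + 1) < (u (36 * q + 1) t).coeff (12 * q * (d₁ - 2) + d₁) := by
    have hpow : (0 : ℝ) < ε ^ (12 * q + 1) := pow_pos hε0 _
    nlinarith [hlam]
  have hphase := kp_x4_phase u hanalytic hrec hpos hder d₁ hd₁ ε hε0 q hq t ht hbase
    (3 * q) le_rfl
  obtain ⟨c, hc⟩ : ∃ c, d₁ = c + 3 := ⟨d₁ - 3, by omega⟩
  have h2 : d₁ - 2 = c + 1 := by omega
  have h3 : d₁ - 3 = c := by omega
  have e1 : 14 * q * (d₁ - 2) = 14 * (q * c) + 14 * q := by rw [h2]; ring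
  have e2 : 12 * q * (d₁ - 2) = 12 * (q * c) + 12 * q := by rw [h2]; ring
  have e3 : 2 * q * (d₁ + 4) = 2 * (q * c) + 14 * q := by rw [hc]; ring
  have e4 : 12 * q * (d₁ - 3) = 12 * (q * c) := by rw [h3]; ring
  have hN : 36 * q + 1 + 2 * (3 * q) = 42 * q + 1 := by ring
  have hKidx : 12 * q * (d₁ - 2) + d₁ - 4 * (3 * q) = 12 * q * (d₁ - 3) + d₁ := by omega
  have hgoalidx : 14 * q * (d₁ - 2) + d₁ - 2 * q * (d₁ + 4) = 12 * q * (d₁ - 3) + d₁ := by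
    omega
  rw [hN, hKidx] at hphase
  rw [hgoalidx]
  have hBpos : (0 : ℝ) < ((12 * q * (d₁ - 3) + d₁).factorial : ℝ)
      * ((42 * q + 1).factorial : ℝ) := by positivity
  rw [div_mul_eq_mul_div, div_lt_iff₀ hBpos]
  calc ((12 * q * (d₁ - 2) + d₁).factorial : ℝ) * ((36 * q + 1).factorial : ℝ)
        * ε ^ (12 * q + 1)
      = ε ^ (12 * q + 1) * ((12 * q * (d₁ - 2) + d₁).factorial : ℝ)
        * ((36 * q + 1).factorial : ℝ) := by ring
    _ < (u (42 * q + 1) t).coeff (12 * q * (d₁ - 3) + d₁)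
        * ((12 * q * (d₁ - 3) + d₁).factorial : ℝ) * ((42 * q + 1).factorial : ℝ) := hphase
    _ = (u (42 * q + 1) t).coeff (12 * q * (d₁ - 3) + d₁)
        * (((12 * q * (d₁ - 3) + d₁).factorial : ℝ) * ((42 * q + 1).factorial : ℝ)) := by ring
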